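/- arXiv:2603.06411 — 2 statements merged into one kernel-verified Lean document; each statement's English description precedes it below -/
import Mathlib

section
/- Let L > 0 and let q : [0, L] → ℝ be continuous with q(x₁) > 0 for some x₁ ∈ [0, L]. Then there exist C¹ functions h, v : [0, L] → ℝ, compactly supported in (0, L), such that ∫₀ᴸ q(x) h'(x) v'(x) dx > ∫₀ᴸ (|h(x)|² + |v(x)|² + |h'(x)|²) dx. -/
/-!
Choose `0 < c < q x₁`; then `q > c` on a nonempty open subset `U` of `(0, L)`. For `g` supported
in `U`, take `h = g` and `v = (2 / c) g`: the left side is at least `2 ∫ (g')²`, the right side is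
`(1 + 4 / c²) ∫ g² + ∫ (g')²`. Squeezing a fixed bump to width `λ` scales `∫ g²` by `λ` and
`∫ (g')²` by `λ⁻¹`, so a thin enough bump makes the right side the smaller one.
-/

open MeasureTheory Set Metric Filter Topology

theorem tsupport_comp_sub_div_subset {M : Type*} [Zero M] {f : ℝ → M} {R : ℝ}
    (hf : tsupport f ⊆ closedBall 0 R) (m : ℝ) {c : ℝ} (hc : 0 < c) :
    tsupport (fun x => f ((x - m) / c)) ⊆ closedBall m (c * R) := by
  refine closure_minimal (fun x hx => ?_) isClosed_closedBall
  have hxR := hf (subset_tsupport f hx)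
  rw [mem_closedBall, dist_zero_right, Real.norm_eq_abs, abs_div, abs_of_pos hc,
    div_le_iff₀ hc] at hxR
  rw [mem_closedBall, Real.dist_eq]
  linarith

section Rescaling

variable {E : Type*} [NormedAddCommGroup E] [NormedSpace ℝ E]

theorem integral_comp_sub_div (f : ℝ → E) (m : ℝ) {c : ℝ} (hc : 0 < c) :
    ∫ x, f ((x - m) / c) = c • ∫ x, f x := by
  rw [integral_sub_right_eq_self (fun x => f (x / c)) m, Measure.integral_comp_div,
    abs_of_pos hc]

theorem deriv_comp_sub_div {f : ℝ → E} (hf : Differentiable ℝ f) (m c x : ℝ) :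
    deriv (fun x => f ((x - m) / c)) x = c⁻¹ • deriv f ((x - m) / c) := by
  simpa [one_div, Function.comp_def] using
    ((hf _).hasDerivAt.scomp x (((hasDerivAt_id x).sub_const m).div_const c)).deriv

end Rescaling

theorem HasCompactSupport.sq {X M : Type*} [TopologicalSpace X] [MonoidWithZero M] {f : X → M}
    (hf : HasCompactSupport f) : HasCompactSupport fun x => f x ^ 2 :=
  hf.comp_left (g := fun y : M => y ^ 2) (zero_pow two_ne_zero)

theorem integral_deriv_sq_pos {f : ℝ → ℝ} (hf : ContDiff ℝ 1 f) (hcs : HasCompactSupport f)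
    {a b : ℝ} (hab : f a ≠ f b) : 0 < ∫ x, deriv f x ^ 2 := by
  obtain ⟨x, hx⟩ : ∃ x, deriv f x ≠ 0 := by
    by_contra! h
    exact hab (is_const_of_deriv_eq_zero (hf.differentiable one_ne_zero) h a b)
  exact ((hf.continuous_deriv le_rfl).pow 2).integral_pos_of_hasCompactSupport_nonneg_nonzero
    hcs.deriv.sq (fun _ => sq_nonneg _) (pow_ne_zero 2 hx)

theorem exists_integral_sq_lt_integral_deriv_sq {U : Set ℝ} (hU : IsOpen U) (hne : U.Nonempty)
    (K : ℝ) : ∃ g : ℝ → ℝ, ContDiff ℝ 1 g ∧ HasCompactSupport g ∧ tsupport g ⊆ U ∧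
      K * ∫ x, g x ^ 2 < ∫ x, deriv g x ^ 2 := by
  obtain ⟨m, hm⟩ := hne
  obtain ⟨r, hr, hball⟩ := Metric.isOpen_iff.1 hU m hm
  let ψ : ContDiffBump (0 : ℝ) := ⟨1, 2, one_pos, one_lt_two⟩
  have hψ : ContDiff ℝ 1 ψ := ψ.contDiff
  set A := ∫ y, ψ y ^ 2
  set B := ∫ y, deriv ψ y ^ 2
  have hB : 0 < B := integral_deriv_sq_pos hψ ψ.hasCompactSupport (a := 0) (b := 2) <| by
    rw [ψ.one_of_mem_closedBall (by simp [ψ]), ψ.zero_of_le_dist (by simp [ψ])]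
    exact one_ne_zero
  obtain ⟨c, ⟨hcB, hcr⟩, hc⟩ : ∃ c, (K * c ^ 2 * A < B ∧ 2 * c < r) ∧ 0 < c := by
    have hsmall : ∀ᶠ c in 𝓝 (0 : ℝ), K * c ^ 2 * A < B ∧ 2 * c < r :=
      (ContinuousAt.eventually_lt (by fun_prop) continuousAt_const (by simpa using hB)).and
        (ContinuousAt.eventually_lt (by fun_prop) continuousAt_const (by simpa using hr))
    have hpos : ∀ᶠ c in 𝓝[>] (0 : ℝ), (K * c ^ 2 * A < B ∧ 2 * c < r) ∧ 0 < c :=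
      (hsmall.filter_mono nhdsWithin_le_nhds).and self_mem_nhdsWithin
    exact hpos.exists
  have hsupp : tsupport (fun x => ψ ((x - m) / c)) ⊆ closedBall m (c * 2) :=
    tsupport_comp_sub_div_subset ψ.tsupport_eq.subset m hc
  refine ⟨fun x => ψ ((x - m) / c), hψ.comp (by fun_prop),
    (isCompact_closedBall m _).of_isClosed_subset (isClosed_tsupport _) hsupp,
    hsupp.trans ((closedBall_subset_ball (by linarith)).trans hball), ?_⟩
  have hA' : ∫ x, ψ ((x - m) / c) ^ 2 = c * A := integral_comp_sub_div (fun y => ψ y ^ 2) m hc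
  have hB' : ∫ x, deriv (fun x => ψ ((x - m) / c)) x ^ 2 = c⁻¹ ^ 2 * (c * B) := by
    simp only [deriv_comp_sub_div (hψ.differentiable one_ne_zero), smul_eq_mul, mul_pow]
    rw [integral_const_mul, integral_comp_sub_div (fun y => deriv ψ y ^ 2) m hc, smul_eq_mul]
  rw [hA', hB']
  refine lt_of_mul_lt_mul_left ?_ hc.le
  field_simp
  linarith

theorem ContinuousWithinAt.exists_mem_lt {X : Type*} [TopologicalSpace X] {f : X → ℝ}
    {s t : Set X} {x : X} {c : ℝ} (hf : ContinuousWithinAt f t x) (hst : s ⊆ t)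
    (hx : x ∈ closure s) (hc : c < f x) : ∃ y ∈ s, c < f y := by
  have := mem_closure_iff_nhdsWithin_neBot.1 hx
  obtain ⟨y, hy, hys⟩ :=
    (((hf.eventually (lt_mem_nhds hc)).filter_mono (nhdsWithin_mono x hst)).and
      self_mem_nhdsWithin).exists
  exact ⟨y, hys, hy⟩

section Energy

variable {g : ℝ → ℝ} {a b : ℝ}

theorem intervalIntegral_eq_integral_of_tsupport_subset {F : ℝ → ℝ} (hg : tsupport g ⊆ Ioc a b)
    (hF : ∀ x ∉ tsupport g, F x = 0) : ∫ x in a..b, F x = ∫ x, F x :=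
  intervalIntegral.integral_eq_integral_of_support_subset fun x hx =>
    hg (by_contra fun h => hx (hF x h))

theorem intervalIntegral_sq_add_sq_add_deriv_sq (hg : ContDiff ℝ 1 g) (hgc : HasCompactSupport g)
    (hab : tsupport g ⊆ Ioc a b) (t : ℝ) :
    ∫ x in a..b, (|g x| ^ 2 + |t * g x| ^ 2 + |deriv g x| ^ 2)
      = (1 + t ^ 2) * (∫ x, g x ^ 2) + ∫ x, deriv g x ^ 2 := by
  have hgi : Integrable fun x => g x ^ 2 :=
    (hg.continuous.pow 2).integrable_of_hasCompactSupport hgc.sq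
  have hdgi : Integrable fun x => deriv g x ^ 2 :=
    ((hg.continuous_deriv le_rfl).pow 2).integrable_of_hasCompactSupport hgc.deriv.sq
  rw [intervalIntegral_eq_integral_of_tsupport_subset hab fun x hx => by
      simp [image_eq_zero_of_notMem_tsupport hx, deriv_of_notMem_tsupport hx],
    ← integral_const_mul, ← integral_add (hgi.const_mul _) hdgi]
  congr 1 with x
  simp only [sq_abs]
  ring

theorem mul_integral_deriv_sq_le {q : ℝ → ℝ} {c : ℝ} (hab : a ≤ b) (hq : ContinuousOn q (Icc a b))
    (hg : ContDiff ℝ 1 g) (hgq : tsupport g ⊆ Ioc a b ∩ q ⁻¹' Ici c) :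
    c * ∫ x, deriv g x ^ 2 ≤ ∫ x in a..b, q x * deriv g x ^ 2 := by
  have hcont : Continuous (deriv g) := hg.continuous_deriv le_rfl
  rw [← integral_const_mul, ← intervalIntegral_eq_integral_of_tsupport_subset
    (hgq.trans inter_subset_left) fun x hx => by simp [deriv_of_notMem_tsupport hx]]
  refine intervalIntegral.integral_mono_on hab
    ((by fun_prop : Continuous fun x => c * deriv g x ^ 2).intervalIntegrable a b)
    ((hq.mul (hcont.pow 2).continuousOn).intervalIntegrable_of_Icc hab) fun x _ => ?_
  by_cases hx : x ∈ tsupport g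
  · exact mul_le_mul_of_nonneg_right (hgq hx).2 (sq_nonneg _)
  · simp [deriv_of_notMem_tsupport hx]

end Energy

theorem stmt_13 (L : ℝ) (hL : 0 < L) (q : ℝ → ℝ)
    (hq : ContinuousOn q (Set.Icc 0 L))
    (x₁ : ℝ) (hx₁ : x₁ ∈ Set.Icc 0 L) (hpos : 0 < q x₁) :
    ∃ h v : ℝ → ℝ, ContDiff ℝ 1 h ∧ ContDiff ℝ 1 v ∧
      tsupport h ⊆ Set.Ioo 0 L ∧ tsupport v ⊆ Set.Ioo 0 L ∧
      (∫ x in (0 : ℝ)..L, q x * deriv h x * deriv v x)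
        > ∫ x in (0 : ℝ)..L, (|h x| ^ 2 + |v x| ^ 2 + |deriv h x| ^ 2) := by
  obtain ⟨c, hc, hcq⟩ := exists_between hpos
  set U := Ioo 0 L ∩ q ⁻¹' Ioi c
  have hU : IsOpen U := (hq.mono Ioo_subset_Icc_self).isOpen_inter_preimage isOpen_Ioo isOpen_Ioi
  have hne : U.Nonempty :=
    (hq x₁ hx₁).exists_mem_lt Ioo_subset_Icc_self (by rwa [closure_Ioo hL.ne]) hcq
  obtain ⟨g, hg, hgc, hgU, hgK⟩ := exists_integral_sq_lt_integral_deriv_sq hU hne (1 + (2 / c) ^ 2)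
  have hgI : tsupport g ⊆ Ioo 0 L := hgU.trans inter_subset_left
  have hgq : tsupport g ⊆ Ioc 0 L ∩ q ⁻¹' Ici c :=
    hgU.trans (inter_subset_inter Ioo_subset_Ioc_self (preimage_mono Ioi_subset_Ici_self))
  refine ⟨g, fun x => 2 / c * g x, hg, contDiff_const.mul hg, hgI,
    tsupport_mul_subset_right.trans hgI, ?_⟩
  calc ∫ x in (0 : ℝ)..L, (|g x| ^ 2 + |2 / c * g x| ^ 2 + |deriv g x| ^ 2)
      = (1 + (2 / c) ^ 2) * (∫ x, g x ^ 2) + ∫ x, deriv g x ^ 2 :=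
        intervalIntegral_sq_add_sq_add_deriv_sq hg hgc (hgq.trans inter_subset_left) _
    _ < 2 / c * (c * ∫ x, deriv g x ^ 2) := by
        rw [← mul_assoc, div_mul_cancel₀ _ hc.ne']
        linarith
    _ ≤ 2 / c * ∫ x in (0 : ℝ)..L, q x * deriv g x ^ 2 := by
        gcongr
        exact mul_integral_deriv_sq_le hL.le hq hg hgq
    _ = ∫ x in (0 : ℝ)..L, q x * deriv g x * deriv (fun x => 2 / c * g x) x := by
        rw [deriv_const_mul_field', ← intervalIntegral.integral_const_mul]
        congr 1 with x
        ring
end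

section
/- Let ε, μ > 0 and let z : [0, L] → ℝ be C¹ with z(0) = 0, satisfying μ z'(x) = -(1/4) Γ(x) z(x) + μ R(x) where Γ, R : [0, L] → ℝ are continuous with Γ(x) ≥ ε and 0 ≤ R(x) ≤ C₁ for all x. Then 0 ≤ z(x) ≤ C₁(4μ/ε) for all x ∈ [0, L]. Furthermore, if R(x₀) > 0 at some point x₀ where z(x₀) = 0, then z'(x₀) > 0. -/
theorem stmt_17 (L ε μ C₁ : ℝ) (hL : 0 ≤ L) (hε : 0 < ε) (hμ : 0 < μ) (hC₁ : 0 ≤ C₁)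
    (z z' Γ R : ℝ → ℝ)
    (hz0 : z 0 = 0)
    (hz : ∀ x ∈ Set.Icc 0 L, HasDerivAt z (z' x) x)
    (hz'c : ContinuousOn z' (Set.Icc 0 L))
    (hΓc : ContinuousOn Γ (Set.Icc 0 L)) (hRc : ContinuousOn R (Set.Icc 0 L))
    (hode : ∀ x ∈ Set.Icc 0 L, μ * z' x = -(1 / 4) * Γ x * z x + μ * R x)
    (hΓ : ∀ x ∈ Set.Icc 0 L, ε ≤ Γ x)
    (hR : ∀ x ∈ Set.Icc 0 L, 0 ≤ R x ∧ R x ≤ C₁) :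
    (∀ x ∈ Set.Icc 0 L, 0 ≤ z x ∧ z x ≤ C₁ * (4 * μ / ε)) ∧
      ∀ x₀ ∈ Set.Icc 0 L, z x₀ = 0 → 0 < R x₀ → 0 < z' x₀ := by
  -- projection onto [0, L]
  set proj : ℝ → ℝ := fun x => max 0 (min x L) with hproj_def
  have hprojc : Continuous proj := continuous_const.max (continuous_id.min continuous_const)
  have hprojmem : ∀ x, proj x ∈ Set.Icc 0 L := by
    intro x
    constructor
    · exact le_max_left _ _
    · exact max_le hL (min_le_right _ _)
  have hprojid : ∀ x ∈ Set.Icc 0 L, proj x = x := by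
    intro x hx
    simp only [hproj_def]
    rw [min_eq_left hx.2, max_eq_right hx.1]
  -- extended Γ
  set Γe : ℝ → ℝ := fun x => Γ (proj x) with hΓe_def
  have hΓec : Continuous Γe := hΓc.comp_continuous hprojc hprojmem
  have hΓee : ∀ x ∈ Set.Icc 0 L, Γe x = Γ x := fun x hx => by
    simp only [hΓe_def, hprojid x hx]
  -- integrating factor exponent
  set G : ℝ → ℝ := fun x => ∫ t in (0:ℝ)..x, Γe t / (4 * μ) with hG_def
  have hΓμc : Continuous (fun t => Γe t / (4 * μ)) := hΓec.div_const _
  have hG : ∀ x, HasDerivAt G (Γe x / (4 * μ)) x := fun x =>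
    (hΓμc.integral_hasStrictDerivAt 0 x).hasDerivAt
  have hG0 : G 0 = 0 := by simp [hG_def]
  -- the function w = z · exp G
  set E : ℝ → ℝ := fun x => Real.exp (G x) with hE_def
  have hE : ∀ x, HasDerivAt E (Γe x / (4 * μ) * E x) x := fun x => by
    simpa [hE_def, mul_comm] using (hG x).exp
  have hEpos : ∀ x, 0 < E x := fun x => Real.exp_pos _
  set w : ℝ → ℝ := fun x => z x * E x with hw_def
  have hw : ∀ x ∈ Set.Icc 0 L, HasDerivAt w (R x * E x) x := by
    intro x hx
    have h := (hz x hx).mul (hE x)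
    have hodex := hode x hx
    have hz'x : z' x = -(Γ x * z x) / (4 * μ) + R x := by
      field_simp at hodex ⊢
      linarith
    have : z' x * E x + z x * (Γe x / (4 * μ) * E x) = R x * E x := by
      rw [hz'x, hΓee x hx]
      field_simp
      ring
    rwa [this] at h
  have hicc : Convex ℝ (Set.Icc (0:ℝ) L) := convex_Icc 0 L
  have hintsub : interior (Set.Icc (0:ℝ) L) ⊆ Set.Icc 0 L := interior_subset
  -- w is monotone on [0, L]
  have hwmono : MonotoneOn w (Set.Icc 0 L) := by
    apply monotoneOn_of_hasDerivWithinAt_nonneg hicc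
      (fun x hx => (hw x hx).continuousAt.continuousWithinAt)
      (fun x hx => ((hw x (hintsub hx)).hasDerivWithinAt))
    intro x hx
    exact mul_nonneg (hR x (hintsub hx)).1 (hEpos x).le
  have hw0 : w 0 = 0 := by simp [hw_def, hz0]
  -- upper comparison function
  set C : ℝ := C₁ * (4 * μ / ε) with hC_def
  have hCpos : 0 ≤ C := by positivity
  set u : ℝ → ℝ := fun x => C * E x - w x with hu_def
  have humono : MonotoneOn u (Set.Icc 0 L) := by
    have hu : ∀ x ∈ Set.Icc 0 L,
        HasDerivAt u (C * (Γe x / (4 * μ) * E x) - R x * E x) x := by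
      intro x hx
      exact ((hE x).const_mul C).sub (hw x hx)
    apply monotoneOn_of_hasDerivWithinAt_nonneg hicc
      (fun x hx => (hu x hx).continuousAt.continuousWithinAt)
      (fun x hx => ((hu x (hintsub hx)).hasDerivWithinAt))
    intro x hx
    have hx' := hintsub hx
    have h1 : ε ≤ Γ x := hΓ x hx'
    have h2 : R x ≤ C₁ := (hR x hx').2
    have hEx := hEpos x
    rw [hΓee x hx']
    have key : R x ≤ C * (Γ x / (4 * μ)) := by
      have heq : C * (Γ x / (4 * μ)) = C₁ * Γ x / ε := by
        rw [hC_def]; field_simp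
      rw [heq, le_div_iff₀ hε]
      nlinarith [mul_le_mul_of_nonneg_left h1 hC₁]
    nlinarith
  have main : ∀ x ∈ Set.Icc 0 L, 0 ≤ z x ∧ z x ≤ C₁ * (4 * μ / ε) := by
    intro x hx
    have h0mem : (0:ℝ) ∈ Set.Icc 0 L := ⟨le_refl _, hL⟩
    have hwx : 0 ≤ w x := by
      have := hwmono h0mem hx hx.1
      rwa [hw0] at this
    have hux : u 0 ≤ u x := humono h0mem hx hx.1
    have hu0 : u 0 = C := by simp [hu_def, hw0, hE_def, hG0]
    constructor
    · have h' : 0 ≤ E x * z x := by rw [mul_comm]; exact hwx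
      exact nonneg_of_mul_nonneg_right h' (hEpos x)
    · rw [hu0] at hux
      have hE1 : (1:ℝ) ≤ E x := by
        rw [hE_def]
        simp only
        rw [show (1:ℝ) = Real.exp 0 by simp]
        apply Real.exp_le_exp.2
        rw [← hG0]
        have hGmono : MonotoneOn G (Set.Icc 0 L) := by
          apply monotoneOn_of_hasDerivWithinAt_nonneg hicc
            (fun y hy => (hG y).continuousAt.continuousWithinAt)
            (fun y hy => ((hG y).hasDerivWithinAt))
          intro y hy
          have := hΓ y (hintsub hy)
          rw [hΓee y (hintsub hy)]
          exact div_nonneg (by linarith) (by positivity)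
        exact hGmono h0mem hx hx.1
      -- from C ≤ C·E x - z x · E x : z x · E x ≤ C (E x - 1) ≤ C · E x
      have hzE : z x * E x ≤ C * E x - C := by
        simp only [hu_def, hw_def] at hux
        linarith
      have : z x * E x ≤ C * E x := by nlinarith
      have hzle : z x ≤ C := le_of_mul_le_mul_right (by linarith [this]) (hEpos x)
      exact hzle
  refine ⟨main, ?_⟩
  intro x₀ hx₀ hz0' hR0
  have h := hode x₀ hx₀
  rw [hz0'] at h
  have : μ * z' x₀ = μ * R x₀ := by linarith
  have hz' : z' x₀ = R x₀ := mul_left_cancel₀ (ne_of_gt hμ) this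
  rw [hz']
  exact hR0
end
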